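/- arXiv:1812.03720 — 7 statements merged into one kernel-verified Lean document; each statement's English description precedes it below -/
import Mathlib

section
/- Let p be a prime number and let a, b ≥ 2 be coprime integers with p not dividing a·b. Then there exist integers j with 1 ≤ j ≤ a−1 and r with 1 ≤ r ≤ b−1 such that for every d ∈ ℕ there exists N ∈ ℕ with ν_p( ∏_{n=0}^{N} (n·b+r)/(n·a·b + (r·a + j·b + a·b)) ) ≤ −d, where the product is taken in ℚ. -/
/-!
Take `j = a - 1`, `r = b - 1` and write `a * b = a + b + g`; coprimality rules out `a = b = 2`,
so `g ≥ 1`. For `q = p ^ k` and `p ∤ s`, the number of `n < N` with `q ∣ s * n + t` is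
`N / q + [x % q < N % q]`, where `x` is any solution of `q ∣ s * x + t`. Taking for `N` the
residue of `-(b - 1) / b` modulo `p ^ K` removes the bracket at every numerator level `k ≤ K`
and keeps all numerator valuations below `K`, so the valuation of the product is at most minus
the number of levels `k ≤ K` at which the residue `β` of the denominator's root lies below
`N % p ^ k`. At a level with `p ^ k = a * b * v + 1` the two residues are `g * v - 2` and
`(b - 1) * a * v = (b + g) * v`, so every multiple of an exponent `L` with
`p ^ L ≡ 1 [MOD a * b]` is such a level, and `K = (d + 1) * L` provides `d` of them.
-/

open Finset

namespace Nat

theorem dvd_mul_add_iff_modEq {q s t x : ℕ} (hqs : q.Coprime s) (hx : q ∣ s * x + t) {n : ℕ} :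
    q ∣ s * n + t ↔ n ≡ x [MOD q] := by
  have hx' := modEq_zero_iff_dvd.2 hx
  constructor
  · intro h
    exact (((modEq_zero_iff_dvd.2 h).trans hx'.symm).add_right_cancel' t).cancel_left_of_coprime hqs
  · intro h
    exact modEq_zero_iff_dvd.1 (((h.mul_left s).add_right t).trans hx')

theorem mod_eq_of_dvd_mul_add {q s t x y : ℕ} (hqs : q.Coprime s) (hx : q ∣ s * x + t)
    (hy : q ∣ s * y + t) (hyq : y < q) : x % q = y :=
  Eq.trans ((dvd_mul_add_iff_modEq hqs hy).1 hx) (mod_eq_of_lt hyq)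

theorem card_filter_dvd_mul_add {q s t x : ℕ} (hq : 0 < q) (hqs : q.Coprime s)
    (hx : q ∣ s * x + t) (N : ℕ) :
    #{n ∈ range N | q ∣ s * n + t} = N / q + if x % q < N % q then 1 else 0 := by
  rw [← count_modEq_card N hq, count_eq_card_filter_range]
  exact congrArg card (filter_congr fun n _ => dvd_mul_add_iff_modEq hqs hx)

theorem exists_pow_eq_mul_add_one {p m : ℕ} (hp : 1 < p) (h : p.Coprime m) (c : ℕ) :
    ∃ L, 0 < L ∧ ∀ i, 0 < i → ∃ v, c ≤ v ∧ p ^ (i * L) = m * v + 1 := by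
  have hm : 0 < m := pos_of_ne_zero fun h0 => by simp [h0] at h; omega
  refine ⟨φ m * (m * c + 1), Nat.mul_pos (totient_pos.2 hm) (succ_pos _), fun i hi => ?_⟩
  have hmod : p ^ (i * (φ m * (m * c + 1))) ≡ 1 [MOD m] := by
    rw [mul_left_comm, pow_mul]
    simpa using (ModEq.pow_totient h).pow (i * (m * c + 1))
  obtain ⟨v, hv⟩ := (modEq_iff_dvd' (one_le_pow _ _ (by omega))).1 hmod.symm
  have hbig : m * c + 1 < p ^ (i * (φ m * (m * c + 1))) :=
    (Nat.lt_pow_self hp).trans_le (Nat.pow_le_pow_right (by omega) (by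
      rw [← mul_assoc]; exact Nat.le_mul_of_pos_left _ (Nat.mul_pos hi (totient_pos.2 hm))))
  exact ⟨v, Nat.le_of_mul_le_mul_left (by omega) hm, by omega⟩

end Nat

theorem add_lt_mul_of_coprime {a b : ℕ} (ha : 2 ≤ a) (hb : 2 ≤ b) (hab : a.Coprime b) :
    a + b < a * b := by
  rcases (show a = 2 ∧ b = 2 ∨ 3 ≤ a ∨ 3 ≤ b by omega) with ⟨rfl, rfl⟩ | h | h
  · norm_num at hab
  all_goals nlinarith

section padicVal

variable {p : ℕ} [hp : Fact p.Prime]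

theorem padicValNat_prod {s : Finset ℕ} {f : ℕ → ℕ} (hf : ∀ n ∈ s, f n ≠ 0) :
    padicValNat p (∏ n ∈ s, f n) = ∑ n ∈ s, padicValNat p (f n) := by
  simp_rw [← Nat.factorization_def _ hp.out, Nat.factorization_prod hf, Finsupp.finsetSum_apply]

theorem padicValRat_prod_div {s : Finset ℕ} {f g : ℕ → ℕ} (hf : ∀ n ∈ s, f n ≠ 0)
    (hg : ∀ n ∈ s, g n ≠ 0) :
    padicValRat p (∏ n ∈ s, (f n / g n : ℚ)) =
      ∑ n ∈ s, (padicValNat p (f n) : ℤ) - ∑ n ∈ s, (padicValNat p (g n) : ℤ) := by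
  rw [prod_div_distrib, ← Nat.cast_prod, ← Nat.cast_prod,
    padicValRat.div (by simpa [prod_eq_zero_iff] using hf) (by simpa [prod_eq_zero_iff] using hg),
    padicValRat.of_nat, padicValRat.of_nat, padicValNat_prod hf, padicValNat_prod hg]
  push_cast
  rfl

theorem card_filter_pow_dvd {x : ℕ} (hx : x ≠ 0) (K : ℕ) :
    #{k ∈ Icc 1 K | p ^ k ∣ x} = min (padicValNat p x) K := by
  have : {k ∈ Icc 1 K | p ^ k ∣ x} = Icc 1 (min (padicValNat p x) K) := by
    ext k
    simp only [mem_filter, mem_Icc, padicValNat_dvd_iff_le hx, le_min_iff]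
    omega
  simp [this]

theorem sum_card_filter_pow_dvd {s : Finset ℕ} {f : ℕ → ℕ} (hf : ∀ n ∈ s, f n ≠ 0) (K : ℕ) :
    ∑ k ∈ Icc 1 K, #{n ∈ s | p ^ k ∣ f n} = ∑ n ∈ s, min (padicValNat p (f n)) K := by
  have := sum_card_bipartiteAbove_eq_sum_card_bipartiteBelow (s := s) (t := Icc 1 K)
    (r := fun n k => p ^ k ∣ f n)
  simp only [bipartiteAbove, bipartiteBelow] at this
  rw [← this]
  exact sum_congr rfl fun n hn => card_filter_pow_dvd (hf n hn) K

theorem padicValRat_prod_div_le {s t s' t' N β K : ℕ} (hs : p.Coprime s) (hs' : p.Coprime s')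
    (ht : 0 < t) (ht' : 0 < t') (hN : p ^ K ∣ s * N + t) (hNK : N < p ^ K)
    (hβ : p ^ K ∣ s' * β + t') :
    padicValRat p (∏ n ∈ range N, ((s * n + t : ℕ) / (s' * n + t' : ℕ) : ℚ)) ≤
      -#{k ∈ Icc 1 K | β % p ^ k < N % p ^ k} := by
  have hpow : ∀ k ∈ Icc 1 K, 0 < p ^ k ∧ p ^ k ∣ p ^ K := fun k hk =>
    ⟨pow_pos hp.out.pos k, pow_dvd_pow p (mem_Icc.1 hk).2⟩
  have hval : ∀ n ∈ range N, padicValNat p (s * n + t) ≤ K := fun n hn => by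
    by_contra! h
    have hn' := (Nat.dvd_mul_add_iff_modEq (hs.pow_left K) hN).1
      ((padicValNat_dvd_iff_le (by omega)).2 h.le)
    rw [Nat.ModEq, Nat.mod_eq_of_lt hNK, Nat.mod_eq_of_lt ((mem_range.1 hn).trans hNK)] at hn'
    exact (mem_range.1 hn).ne hn'
  have hnum : ∑ n ∈ range N, padicValNat p (s * n + t) = ∑ k ∈ Icc 1 K, N / p ^ k := by
    rw [← sum_congr rfl fun n hn => min_eq_left (hval n hn),
      ← sum_card_filter_pow_dvd (fun n _ => by omega)]
    refine sum_congr rfl fun k hk => ?_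
    rw [Nat.card_filter_dvd_mul_add (hpow k hk).1 (hs.pow_left k) ((hpow k hk).2.trans hN)]
    simp
  have hden : ∑ k ∈ Icc 1 K, N / p ^ k + #{k ∈ Icc 1 K | β % p ^ k < N % p ^ k} ≤
      ∑ n ∈ range N, padicValNat p (s' * n + t') :=
    calc _ = ∑ k ∈ Icc 1 K, #{n ∈ range N | p ^ k ∣ s' * n + t'} := by
          rw [card_filter, ← sum_add_distrib]
          refine sum_congr rfl fun k hk => ?_
          rw [Nat.card_filter_dvd_mul_add (hpow k hk).1 (hs'.pow_left k) ((hpow k hk).2.trans hβ)]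
      _ = ∑ n ∈ range N, min (padicValNat p (s' * n + t')) K :=
          sum_card_filter_pow_dvd (fun n _ => by omega) K
      _ ≤ _ := sum_le_sum fun n _ => min_le_left _ _
  rw [padicValRat_prod_div (fun n _ => by omega) (fun n _ => by omega), ← Nat.cast_sum,
    ← Nat.cast_sum, hnum]
  omega

end padicVal

/- Modulo any divisor of `a * b * w + 1`, the residues of `-(b - 1) / b` and of
`-(g + 2 * a * b) / (a * b)` are `(b - 1) * a * w` and `g * w - 2`. -/
theorem dvd_mul_sub_one_mul_add {a b q w : ℕ} (h : q ∣ a * b * w + 1) :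
    q ∣ b * ((b - 1) * a * w) + (b - 1) := by
  rw [show b * ((b - 1) * a * w) + (b - 1) = (b - 1) * (a * b * w + 1) by ring]
  exact h.mul_left _

theorem dvd_mul_sub_two_add {a b g q w : ℕ} (hw : 2 ≤ g * w) (h : q ∣ a * b * w + 1) :
    q ∣ a * b * (g * w - 2) + (g + 2 * (a * b)) := by
  rw [show a * b * (g * w - 2) + (g + 2 * (a * b)) = g * (a * b * w + 1) by zify [hw]; ring]
  exact h.mul_left _

theorem mod_lt_mod_of_dvd_mul_add_one {a b g q u v : ℕ} (habg : a + b + g = a * b) (hg : 1 ≤ g)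
    (hq : q.Coprime (a * b)) (hv : a * b * v + 1 = q) (hv2 : 2 ≤ v) (hqu : q ∣ a * b * u + 1) :
    (g * u - 2) % q < (b - 1) * a * u % q := by
  have hb : 1 ≤ b := Nat.pos_of_ne_zero (by rintro rfl; simp at habg; omega)
  have hvu : v ≤ u := Nat.le_of_mul_le_mul_left
    (by have := Nat.le_of_dvd (Nat.succ_pos _) hqu; omega) (show 0 < a * b by omega)
  have hgv : 2 ≤ g * v := by nlinarith
  have hra : (b - 1) * a = b + g := by rw [Nat.sub_one_mul, mul_comm]; omega
  have hq' : q ∣ a * b * v + 1 := dvd_of_eq hv.symm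
  have habv : a * b * v = a * v + (b * v + g * v) := by rw [← habg]; ring
  rw [Nat.mod_eq_of_dvd_mul_add hq.coprime_mul_left_right (dvd_mul_sub_one_mul_add hqu)
      (dvd_mul_sub_one_mul_add hq') (by rw [hra, add_mul]; omega),
    Nat.mod_eq_of_dvd_mul_add hq (dvd_mul_sub_two_add (by nlinarith) hqu)
      (dvd_mul_sub_two_add hgv hq') (by omega), hra, add_mul]
  omega

theorem le_card_filter_mod_lt_mod {p a b g L u d : ℕ} (habg : a + b + g = a * b) (hg : 1 ≤ g)
    (hcop : p.Coprime (a * b)) (hL : 0 < L)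
    (hpow : ∀ i, 0 < i → ∃ v, 2 ≤ v ∧ p ^ (i * L) = a * b * v + 1)
    (hu : p ^ ((d + 1) * L) = a * b * u + 1) :
    d ≤ #{k ∈ Icc 1 ((d + 1) * L) | (g * u - 2) % p ^ k < (b - 1) * a * u % p ^ k} := by
  have hlevels : (Icc 1 d).image (· * L) ⊆
      {k ∈ Icc 1 ((d + 1) * L) | (g * u - 2) % p ^ k < (b - 1) * a * u % p ^ k} := by
    intro k hk
    obtain ⟨i, hi, rfl⟩ := mem_image.1 hk
    obtain ⟨hi1, hid⟩ := mem_Icc.1 hi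
    obtain ⟨v, hv2, hv⟩ := hpow i hi1
    exact mem_filter.2 ⟨mem_Icc.2 ⟨by nlinarith, by nlinarith⟩,
      mod_lt_mod_of_dvd_mul_add_one habg hg (hcop.pow_left _) hv.symm hv2
        (hu ▸ pow_dvd_pow p (by nlinarith))⟩
  have := card_le_card hlevels
  rwa [card_image_of_injective _ (mul_left_injective₀ hL.ne'), Nat.card_Icc,
    Nat.add_sub_cancel] at this

/-- For a prime `p` and coprime integers `a, b ≥ 2` with `p ∤ a·b`, there
exist `1 ≤ j ≤ a−1` and `1 ≤ r ≤ b−1` such that for every `d ∈ ℕ` there is `N ∈ ℕ` with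
`ν_p(∏_{n=0}^{N} (n·b+r)/(n·a·b + (r·a + j·b + a·b))) ≤ −d`. -/
theorem stmt0 (p : ℕ) (hp : p.Prime) (a b : ℕ) (ha : 2 ≤ a) (hb : 2 ≤ b)
    (hab : Nat.Coprime a b) (hpab : ¬ p ∣ a * b) :
    ∃ j r : ℕ, 1 ≤ j ∧ j ≤ a - 1 ∧ 1 ≤ r ∧ r ≤ b - 1 ∧
      ∀ d : ℕ, ∃ N : ℕ,
        padicValRat p (∏ n ∈ Finset.range (N + 1),
          ((n * b + r : ℚ) / (n * a * b + (r * a + j * b + a * b)))) ≤ -(d : ℤ) := by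
  have := Fact.mk hp
  have hcop : p.Coprime (a * b) := (Nat.Prime.coprime_iff_not_dvd hp).2 hpab
  have hlt := add_lt_mul_of_coprime ha hb hab
  set g := a * b - a - b
  have habg : a + b + g = a * b := by omega
  have hc : (b - 1) * a + (a - 1) * b + a * b = g + 2 * (a * b) := by
    rw [Nat.sub_one_mul, Nat.sub_one_mul, mul_comm b a]; omega
  obtain ⟨L, hL, hpow⟩ := Nat.exists_pow_eq_mul_add_one hp.one_lt hcop 2
  refine ⟨a - 1, b - 1, by omega, le_rfl, by omega, le_rfl, fun d => ?_⟩
  obtain ⟨u, hu2, hu⟩ := hpow (d + 1) d.succ_pos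
  have hNK : (b - 1) * a * u < p ^ ((d + 1) * L) := by
    rw [hu, mul_comm a b]
    exact Nat.lt_succ_of_le (Nat.mul_le_mul_right u (Nat.mul_le_mul_right a (Nat.sub_le b 1)))
  refine ⟨(b - 1) * a * u - 1, ?_⟩
  rw [Nat.sub_add_cancel (Nat.mul_pos (Nat.mul_pos (by omega) (by omega)) (by omega))]
  calc _ = padicValRat p (∏ n ∈ range ((b - 1) * a * u),
        ((b * n + (b - 1) : ℕ) / (a * b * n + ((b - 1) * a + (a - 1) * b + a * b) : ℕ) : ℚ)) :=
        congrArg _ (prod_congr rfl fun n _ => by push_cast; ring)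
    _ ≤ -#{k ∈ Icc 1 ((d + 1) * L) | (g * u - 2) % p ^ k < (b - 1) * a * u % p ^ k} :=
        padicValRat_prod_div_le hcop.coprime_mul_left_right hcop (by omega) (by omega)
          (hu ▸ dvd_mul_sub_one_mul_add dvd_rfl) hNK
          (hc ▸ hu ▸ dvd_mul_sub_two_add (by nlinarith) dvd_rfl)
    _ ≤ -d := by
        have := le_card_filter_mod_lt_mod habg (by omega) hcop hL hpow hu
        omega
end

section
/- Let p be a prime number, let a, b ≥ 2 be coprime integers with p not dividing a·b, let j, r be integers with 1 ≤ j ≤ a−1 and 1 ≤ r ≤ b−1, and set c := r·a + j·b + a·b. Let M ∈ ℕ be such that p^M ≥ c and p^M ≡ c (mod a·b), and set N := (p^M − c)/(a·b). Then ν_p( ∏_{n=0}^{N} (n·b+r)/(n·a·b + c) ) ≤ −card{ M' ∈ ℕ : 1 ≤ M' ≤ M, p^{M'} ≥ c and p^{M'} ≡ c (mod a·b) }. -/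
/-!
Writing the product as a quotient of natural numbers not exceeding `p ^ M`, its valuation is
`∑_{k ≤ M} (#{n ≤ N | p ^ k ∣ n b + r} - #{n ≤ N | p ^ k ∣ n a b + c})`. As `p ^ k` divides
`N a b + c = p ^ M`, the `n ≤ N` with `p ^ k ∣ n a b + c` include the whole class of `N` modulo
`p ^ k`, while those with `p ^ k ∣ n b + r` form a single class because `b` is a unit modulo `p`;
so every term is `≤ 0`. If moreover `p ^ k = m a b + c` is itself a denominator, then
`m b + r < p ^ k`, so the numerator class lies above `m` and that term is `≤ -1`.
-/

open Finset

theorem padicValRat_finset_prod {p : ℕ} [Fact p.Prime] {ι : Type*} (s : Finset ι) {f : ι → ℚ}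
    (hf : ∀ i ∈ s, f i ≠ 0) : padicValRat p (∏ i ∈ s, f i) = ∑ i ∈ s, padicValRat p (f i) := by
  induction s using Finset.cons_induction with
  | empty => simp
  | cons i s hi ih =>
    rw [prod_cons, sum_cons, padicValRat.mul (hf i (mem_cons_self i s))
      (prod_ne_zero_iff.mpr fun j hj => hf j (mem_cons_of_mem hj)),
      ih fun j hj => hf j (mem_cons_of_mem hj)]

theorem padicValRat_prod_natCast_div {p : ℕ} [Fact p.Prime] {ι : Type*} (s : Finset ι)
    {x y : ι → ℕ} (hx : ∀ i ∈ s, x i ≠ 0) (hy : ∀ i ∈ s, y i ≠ 0) :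
    padicValRat p (∏ i ∈ s, (x i : ℚ) / y i)
      = ∑ i ∈ s, (padicValNat p (x i) : ℤ) - ∑ i ∈ s, (padicValNat p (y i) : ℤ) := by
  rw [padicValRat_finset_prod s fun i hi => div_ne_zero (by exact_mod_cast hx i hi)
    (by exact_mod_cast hy i hi), ← sum_sub_distrib]
  refine sum_congr rfl fun i hi => ?_
  rw [padicValRat.div (by exact_mod_cast hx i hi) (by exact_mod_cast hy i hi),
    padicValRat.of_nat, padicValRat.of_nat]

theorem padicValNat_eq_card_filter_pow_dvd {p M x : ℕ} (hp : p.Prime) (hx : x ≠ 0)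
    (hxM : x ≤ p ^ M) : padicValNat p x = #{k ∈ Icc 1 M | p ^ k ∣ x} := by
  rw [← Nat.factorization_def x hp, Nat.factorization_eq_card_pow_dvd x hp,
    Nat.Ico_filter_pow_dvd_eq hp hx hxM]

theorem sum_padicValNat_eq_sum_card {p M : ℕ} (hp : p.Prime) (s : Finset ℕ) {f : ℕ → ℕ}
    (hf0 : ∀ n ∈ s, f n ≠ 0) (hfM : ∀ n ∈ s, f n ≤ p ^ M) :
    ∑ n ∈ s, padicValNat p (f n) = ∑ k ∈ Icc 1 M, #{n ∈ s | p ^ k ∣ f n} := by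
  rw [sum_congr rfl fun n hn => padicValNat_eq_card_filter_pow_dvd hp (hf0 n hn) (hfM n hn)]
  simp only [card_filter]
  exact sum_comm

section Counting

variable {q b r A c N : ℕ}

theorem Nat.ModEq.of_dvd_mul_add (hqb : q.Coprime b) {x y : ℕ} (hx : q ∣ x * b + r)
    (hy : q ∣ y * b + r) : x ≡ y [MOD q] :=
  Nat.ModEq.cancel_right_of_coprime hqb <| Nat.ModEq.add_right_cancel' r <|
    (Nat.modEq_zero_iff_dvd.mpr hx).trans (Nat.modEq_zero_iff_dvd.mpr hy).symm

theorem Nat.ModEq.dvd_mul_add {n : ℕ} (h : n ≡ N [MOD q]) (hN : q ∣ N * A + c) :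
    q ∣ n * A + c :=
  Nat.modEq_zero_iff_dvd.mp (((h.mul_right A).add_right c).trans (Nat.modEq_zero_iff_dvd.mpr hN))

theorem card_le_card_filter_modEq {L : ℕ} {S : Finset ℕ} (hS : S ⊆ Icc L N)
    (hcong : ∀ x ∈ S, ∀ y ∈ S, x ≡ y [MOD q]) :
    #S ≤ #{n ∈ Icc L N | n ≡ N [MOD q]} := by
  -- raise `n` to the first element `≥ n` of the class of `N`; it is injective on a single class
  refine card_le_card_of_injOn (fun n => n + (N - n) % q) (fun n hn => ?_) fun x hx y hy hxy => ?_
  · have hn := mem_Icc.mp (hS hn)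
    have hmod : (N - n) % q ≤ N - n := Nat.mod_le _ _
    simp only [coe_filter, mem_Icc, Set.mem_ofPred_eq]
    refine ⟨⟨by omega, by omega⟩, ?_⟩
    have := ((Nat.mod_modEq (N - n) q).add_left n)
    rwa [Nat.add_sub_cancel' hn.2] at this
  · have hx' := mem_Icc.mp (hS hx)
    have hy' := mem_Icc.mp (hS hy)
    have : (N - x) % q = (N - y) % q := by
      refine Nat.ModEq.add_right_cancel (hcong x hx y hy) ?_
      rw [Nat.sub_add_cancel hx'.2, Nat.sub_add_cancel hy'.2]
    simp only at hxy
    omega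

theorem card_filter_dvd_le (hqb : q.Coprime b) (hN : q ∣ N * A + c) :
    #{n ∈ range (N + 1) | q ∣ n * b + r} ≤ #{n ∈ range (N + 1) | q ∣ n * A + c} := by
  calc #{n ∈ range (N + 1) | q ∣ n * b + r}
      ≤ #{n ∈ Icc 0 N | n ≡ N [MOD q]} := by
        refine card_le_card_filter_modEq (fun n hn => ?_) fun x hx y hy =>
          Nat.ModEq.of_dvd_mul_add hqb (mem_filter.mp hx).2 (mem_filter.mp hy).2
        simp only [mem_filter, mem_range, mem_Icc] at hn ⊢
        omega
    _ ≤ #{n ∈ range (N + 1) | q ∣ n * A + c} := by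
        refine card_le_card fun n hn => ?_
        simp only [mem_filter, mem_range, mem_Icc] at hn ⊢
        exact ⟨by omega, hn.2.dvd_mul_add hN⟩

theorem card_filter_dvd_lt (hqb : q.Coprime b) (hr : r ≠ 0) (hN : q ∣ N * A + c) {m : ℕ}
    (hmN : m ≤ N) (hmA : m * A + c = q) (hmb : m * b + r < q) :
    #{n ∈ range (N + 1) | q ∣ n * b + r} < #{n ∈ range (N + 1) | q ∣ n * A + c} := by
  have hm : m ∉ {n ∈ Icc (m + 1) N | n ≡ N [MOD q]} := by simp
  calc #{n ∈ range (N + 1) | q ∣ n * b + r}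
      ≤ #{n ∈ Icc (m + 1) N | n ≡ N [MOD q]} := by
        refine card_le_card_filter_modEq (fun n hn => ?_) fun x hx y hy =>
          Nat.ModEq.of_dvd_mul_add hqb (mem_filter.mp hx).2 (mem_filter.mp hy).2
        simp only [mem_filter, mem_range, mem_Icc] at hn ⊢
        have hq : q ≤ n * b + r := Nat.le_of_dvd (by omega) hn.2
        have : n ≤ m → n * b ≤ m * b := fun h => Nat.mul_le_mul_right b h
        omega
    _ < #(insert m {n ∈ Icc (m + 1) N | n ≡ N [MOD q]}) := by
        rw [card_insert_of_notMem hm]; omega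
    _ ≤ #{n ∈ range (N + 1) | q ∣ n * A + c} := by
        refine card_le_card fun n hn => ?_
        simp only [mem_insert, mem_filter, mem_range, mem_Icc] at hn ⊢
        rcases hn with rfl | hn
        · exact ⟨by omega, hmA ▸ dvd_refl q⟩
        · exact ⟨by omega, hn.2.dvd_mul_add hN⟩

end Counting

theorem card_filter_dvd_add_ite_le {q a b r c N : ℕ} (hqb : q.Coprime b) (hab : a * b ≠ 0)
    (hr : r ≠ 0) (hrc : r < c) (hqN : q ∣ N * (a * b) + c) (hqle : q ≤ N * (a * b) + c) :
    #{n ∈ range (N + 1) | q ∣ n * b + r} + (if c ≤ q ∧ q ≡ c [MOD a * b] then 1 else 0)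
      ≤ #{n ∈ range (N + 1) | q ∣ n * (a * b) + c} := by
  split_ifs with hspecial
  · obtain ⟨hcq, hmod⟩ := hspecial
    obtain ⟨m, hm⟩ := (Nat.modEq_iff_dvd' hcq).mp hmod.symm
    have hmA : m * (a * b) + c = q := by rw [mul_comm, ← hm]; omega
    have hmN : m ≤ N := Nat.le_of_mul_le_mul_right (by omega) (Nat.pos_of_ne_zero hab)
    have ha : 0 < a := Nat.pos_of_ne_zero (left_ne_zero_of_mul hab)
    have hmb : m * b ≤ m * (a * b) := Nat.mul_le_mul_left m (Nat.le_mul_of_pos_left b ha)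
    exact card_filter_dvd_lt hqb hr hqN hmN hmA (by omega)
  · exact card_filter_dvd_le hqb hqN

theorem stmt1_general (p : ℕ) (hp : p.Prime) (a b : ℕ) (hpab : ¬ p ∣ a * b) (j r : ℕ) (hr1 : 1 ≤ r)
    (c : ℕ) (hc : c = r * a + j * b + a * b)
    (M : ℕ) (hM1 : c ≤ p ^ M) (hM2 : p ^ M ≡ c [MOD a * b])
    (N : ℕ) (hN : N = (p ^ M - c) / (a * b)) :
    padicValRat p (∏ n ∈ Finset.range (N + 1), ((n * b + r : ℚ) / (n * a * b + c)))
      ≤ -(((Finset.Icc 1 M).filter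
            (fun M' => c ≤ p ^ M' ∧ p ^ M' ≡ c [MOD a * b])).card : ℤ) := by
  have : Fact p.Prime := ⟨hp⟩
  have hab : a * b ≠ 0 := fun h => hpab (h ▸ dvd_zero p)
  have ha : 0 < a := Nat.pos_of_ne_zero (left_ne_zero_of_mul hab)
  have hrc : r < c := by
    have := Nat.le_mul_of_pos_right r ha
    omega
  have hpM : N * (a * b) + c = p ^ M := by
    rw [hN, Nat.div_mul_cancel ((Nat.modEq_iff_dvd' hM1).mp hM2.symm)]
    omega
  have hcop (k : ℕ) : (p ^ k).Coprime b :=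
    ((hp.coprime_iff_not_dvd).mpr fun h => hpab (h.mul_left a)).pow_left k
  have hnum (n) (hn : n ∈ range (N + 1)) : n * b + r ≤ p ^ M := by
    have := Nat.mul_le_mul (Nat.lt_succ_iff.mp (mem_range.mp hn)) (Nat.le_mul_of_pos_left b ha)
    omega
  have hden (n) (hn : n ∈ range (N + 1)) : n * (a * b) + c ≤ p ^ M := by
    have := Nat.mul_le_mul_right (a * b) (Nat.lt_succ_iff.mp (mem_range.mp hn))
    omega
  have hcount : ∑ k ∈ Icc 1 M, #{n ∈ range (N + 1) | p ^ k ∣ n * b + r}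
      + #{k ∈ Icc 1 M | c ≤ p ^ k ∧ p ^ k ≡ c [MOD a * b]}
      ≤ ∑ k ∈ Icc 1 M, #{n ∈ range (N + 1) | p ^ k ∣ n * (a * b) + c} := by
    rw [card_filter, ← sum_add_distrib]
    refine sum_le_sum fun k hk => card_filter_dvd_add_ite_le (hcop k) hab (by omega) hrc ?_ ?_
    · exact hpM ▸ pow_dvd_pow p (mem_Icc.mp hk).2
    · exact hpM ▸ Nat.pow_le_pow_right hp.pos (mem_Icc.mp hk).2
  have hcast : ∏ n ∈ range (N + 1), ((n * b + r : ℚ) / (n * a * b + c))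
      = ∏ n ∈ range (N + 1), ((n * b + r : ℕ) : ℚ) / ((n * (a * b) + c : ℕ) : ℚ) :=
    prod_congr rfl fun n _ => by push_cast; ring
  rw [hcast, padicValRat_prod_natCast_div _ (fun n _ => by omega) (fun n _ => by omega),
    ← Nat.cast_sum, ← Nat.cast_sum, sum_padicValNat_eq_sum_card hp _ (fun n _ => by omega) hnum,
    sum_padicValNat_eq_sum_card hp _ (fun n _ => by omega) hden]
  omega

/-- quantitative valuation estimate from the proof of Theorem 3.1. -/
theorem stmt1 (p : ℕ) (hp : p.Prime) (a b : ℕ) (ha : 2 ≤ a) (hb : 2 ≤ b)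
    (hab : Nat.Coprime a b) (hpab : ¬ p ∣ a * b)
    (j r : ℕ) (hj1 : 1 ≤ j) (hj2 : j ≤ a - 1) (hr1 : 1 ≤ r) (hr2 : r ≤ b - 1)
    (c : ℕ) (hc : c = r * a + j * b + a * b)
    (M : ℕ) (hM1 : c ≤ p ^ M) (hM2 : p ^ M ≡ c [MOD a * b])
    (N : ℕ) (hN : N = (p ^ M - c) / (a * b)) :
    padicValRat p (∏ n ∈ Finset.range (N + 1), ((n * b + r : ℚ) / (n * a * b + c)))
      ≤ -(((Finset.Icc 1 M).filter
            (fun M' => c ≤ p ^ M' ∧ p ^ M' ≡ c [MOD a * b])).card : ℤ) :=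
  stmt1_general p hp a b hpab j r hr1 c hc M hM1 hM2 N hN
end

section
/- Let p be a prime number, let a, b, r, c, M, M', N be natural numbers with p not dividing a·b, r ≥ 1, c ≥ 1, 1 ≤ M' ≤ M, and N·a·b + c = p^M. Define P_{M'} := {n : 0 ≤ n ≤ N, p^{M'} ∣ n·b + r} and Q_{M'} := {n : 0 ≤ n ≤ N, p^{M'} ∣ n·a·b + c}. Then |P_{M'}| ≤ |Q_{M'}|. -/
/-!
Put `q = p ^ M'`, which is coprime to `b`. The `n` counted in `P_{M'}` form a single residue
class modulo `q`, and a residue class meets `[0, N]` in at most `N / q + 1` points. Since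
`q ∣ p ^ M = N a b + c`, every `n ≤ N` with `n ≡ N [MOD q]` lies in `Q_{M'}`, and there are
exactly `N / q + 1` of them.
-/

open Finset

namespace Nat

theorem card_filter_modEq_range_le (q N v : ℕ) :
    #{n ∈ range (N + 1) | n ≡ v [MOD q]} ≤ N / q + 1 := by
  -- `n ↦ n / q` is injective on a residue class, since `n = q * (n / q) + n % q`.
  simpa using card_le_card_of_injOn (t := range (N / q + 1)) (· / q)
    (fun n hn => by
      simp only [coe_filter, mem_range, Set.mem_ofPred_eq, coe_range, Set.mem_Iio] at hn ⊢
      exact lt_succ_of_le (Nat.div_le_div_right (le_of_lt_succ hn.1)))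
    (fun n hn m hm (h : n / q = m / q) => by
      simp only [coe_filter, Set.mem_ofPred_eq] at hn hm
      rw [← div_add_mod n q, ← div_add_mod m q, h, hn.2.trans hm.2.symm])

theorem card_filter_modEq_self_range {q : ℕ} (hq : 0 < q) (N : ℕ) :
    #{n ∈ range (N + 1) | n ≡ N [MOD q]} = N / q + 1 := by
  refine (card_filter_modEq_range_le q N N).antisymm ?_
  have hmul {k : ℕ} (hk : k ∈ range (N / q + 1)) : q * k ≤ N :=
    mul_comm k q ▸ (le_div_iff_mul_le hq).mp (le_of_lt_succ (mem_range.mp hk))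
  simpa using card_le_card_of_injOn (s := range (N / q + 1)) (fun k => N - q * k)
    (fun k hk => by
      simp only [coe_filter, mem_range, Set.mem_ofPred_eq]
      exact ⟨by omega, sub_mul_mod (hmul hk)⟩)
    (fun k hk l hl (h : N - q * k = N - q * l) =>
      Nat.eq_of_mul_eq_mul_left hq (by have := hmul hk; have := hmul hl; omega))

theorem card_filter_dvd_mul_add_le {q b : ℕ} (hqb : q.Coprime b) (r N : ℕ) :
    #{n ∈ range (N + 1) | q ∣ n * b + r} ≤ N / q + 1 := by
  obtain ⟨n₀, hn₀⟩ | hempty :=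
    (filter (fun n => q ∣ n * b + r) (range (N + 1))).eq_empty_or_nonempty.symm
  · refine (card_le_card fun n hn => ?_).trans (card_filter_modEq_range_le q N n₀)
    simp only [mem_filter] at hn hn₀ ⊢
    refine ⟨hn.1, ModEq.cancel_right_of_coprime hqb (ModEq.add_right_cancel' r ?_)⟩
    exact (modEq_zero_iff_dvd.mpr hn.2).trans (modEq_zero_iff_dvd.mpr hn₀.2).symm
  · simp [hempty]

theorem le_card_filter_dvd_mul_add {q N d c : ℕ} (hq : 0 < q) (h : q ∣ N * d + c) :
    N / q + 1 ≤ #{n ∈ range (N + 1) | q ∣ n * d + c} := by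
  rw [← card_filter_modEq_self_range hq N]
  refine card_le_card fun n hn => ?_
  simp only [mem_filter] at hn ⊢
  refine ⟨hn.1, modEq_zero_iff_dvd.mp ?_⟩
  exact ((hn.2.mul_right d).add_right c).trans (modEq_zero_iff_dvd.mpr h)

end Nat

theorem stmt3_general (p : ℕ) (hp : p.Prime) (a b r c M M' N : ℕ)
    (hpab : ¬ p ∣ a * b) (hM'M : M' ≤ M) (hN : N * a * b + c = p ^ M) :
    ((Finset.range (N + 1)).filter (fun n => p ^ M' ∣ n * b + r)).card
      ≤ ((Finset.range (N + 1)).filter (fun n => p ^ M' ∣ n * a * b + c)).card := by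
  have hcop : (p ^ M').Coprime b :=
    ((hp.coprime_iff_not_dvd).mpr fun h => hpab (h.mul_left a)).pow_left M'
  have hdvd : p ^ M' ∣ N * (a * b) + c := mul_assoc N a b ▸ hN ▸ pow_dvd_pow p hM'M
  simp_rw [mul_assoc _ a b]
  exact (Nat.card_filter_dvd_mul_add_le hcop r N).trans
    (Nat.le_card_filter_dvd_mul_add (pow_pos hp.pos M') hdvd)

/-- `|P_{M'}| ≤ |Q_{M'}|` in the proof of Theorem 3.1. -/
theorem stmt3 (p : ℕ) (hp : p.Prime) (a b r c M M' N : ℕ)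
    (hpab : ¬ p ∣ a * b) (hr : 1 ≤ r) (hc : 1 ≤ c)
    (hM'1 : 1 ≤ M') (hM'M : M' ≤ M) (hN : N * a * b + c = p ^ M) :
    ((Finset.range (N + 1)).filter (fun n => p ^ M' ∣ n * b + r)).card
      ≤ ((Finset.range (N + 1)).filter (fun n => p ^ M' ∣ n * a * b + c)).card :=
  stmt3_general p hp a b r c M M' N hpab hM'M hN
end

section
/- Let K be a field of characteristic 0, let a, b be coprime positive integers, and let f = y^a + Σ_{k=1}^{a−1} f_k(x)·y^k + f_0(x) ∈ K[x,y] with f_k(x) ∈ K[x]. Set B := K[x,y]/(f), let Ω := Ω_{B/K} be the module of Kähler differentials of B over K and let d : B → Ω be the universal derivation. Then for all natural numbers j and l, the element x^l·( Σ_{k=1}^{a−1} (j/(k+j))·f_k'(x)·y^k + f_0'(x) )·y^j·dx − l·x^{l−1}·( (a/(a+j))·y^a + Σ_{k=1}^{a−1} (k/(k+j))·f_k(x)·y^k )·y^j·dx of Ω lies in the image of d (here f_k' denotes the derivative of f_k, x, y denote the images of the variables in B, and for l = 0 the second summand is interpreted as 0). -/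
/-!
The form is `dG` for `G = x^l P` with `P = f₀ y^j + Σ_k j/(k+j) f_k y^(k+j) + j/(a+j) y^(a+j)`,
a `y`-antiderivative of `j y^(j-1) f`. In `K[x,y]` one has `∂_y G = j x^l y^(j-1) f`, and since
`P + y^j (a/(a+j) y^a + Σ_k k/(k+j) f_k y^k) = y^j f`, the polynomial `∂_x G` differs from the
coefficient of `dx` by `l x^(l-1) y^j f`. Both multiples of `f` vanish in `B`, so
`dG = ∂_x G dx + ∂_y G dy` is the given form.
-/

open MvPolynomial

theorem Derivation.map_mvPolynomial_aeval {R A M σ : Type*} [CommRing R] [CommRing A] [Algebra R A]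
    [AddCommGroup M] [Module A M] [Module R M] [IsScalarTower R A M] [Fintype σ]
    (D : Derivation R A M) (x : σ → A) (p : MvPolynomial σ R) :
    D (aeval x p) = ∑ i, aeval x (pderiv i p) • D (x i) := by
  classical
  induction p using MvPolynomial.induction_on with
  | C c => simp
  | add p q hp hq => simp [hp, hq, add_smul, Finset.sum_add_distrib]
  | mul_X p i hp =>
    simp [D.leibniz, hp, pderiv_X, add_smul, Finset.sum_add_distrib, Finset.smul_sum, mul_smul,
      Pi.single_apply, smul_comm (x i), apply_ite (aeval x), ite_smul]

theorem KaehlerDifferential.mk_smul_D_mk_X_mem_range {R σ : Type*} [CommRing R] [Fintype σ]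
    {I : Ideal (MvPolynomial σ R)} {G ω : MvPolynomial σ R} (i : σ)
    (hi : pderiv i G - ω ∈ I) (hk : ∀ k ≠ i, pderiv k G ∈ I) :
    Ideal.Quotient.mk I ω • D R (MvPolynomial σ R ⧸ I) (Ideal.Quotient.mk I (X i))
      ∈ Set.range (D R (MvPolynomial σ R ⧸ I)) := by
  have hmk (q : MvPolynomial σ R) :
      Ideal.Quotient.mk I q = aeval (fun k ↦ Ideal.Quotient.mk I (X k)) q :=
    DFunLike.congr_fun (aeval_unique (Ideal.Quotient.mkₐ R I)) q
  refine ⟨Ideal.Quotient.mk I G, ?_⟩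
  rw [hmk G, Derivation.map_mvPolynomial_aeval, Finset.sum_eq_single i, ← hmk,
    Ideal.Quotient.eq.mpr hi]
  · intro k _ hki
    rw [← hmk, Ideal.Quotient.eq_zero_iff_mem.mpr (hk k hki)]
    exact zero_smul (MvPolynomial σ R ⧸ I) (D R _ (Ideal.Quotient.mk I (X k)))
  · simp

section

variable {K : Type*} [Field K]

noncomputable def curvePoly (a : ℕ) (f₀ : Polynomial K) (fc : ℕ → Polynomial K) :
    MvPolynomial (Fin 2) K :=
  X 1 ^ a + (∑ k ∈ Finset.Icc 1 (a - 1), Polynomial.aeval (X 0) (fc k) * X 1 ^ k)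
    + Polynomial.aeval (X 0) f₀

noncomputable def curvePrimitive (a j : ℕ) (f₀ : Polynomial K) (fc : ℕ → Polynomial K) :
    MvPolynomial (Fin 2) K :=
  Polynomial.aeval (X 0) f₀ * X 1 ^ j
    + (∑ k ∈ Finset.Icc 1 (a - 1),
        C ((j : K) / ((k : K) + (j : K))) * Polynomial.aeval (X 0) (fc k) * X 1 ^ (k + j))
    + C ((j : K) / ((a : K) + (j : K))) * X 1 ^ (a + j)

lemma pderiv_aeval_X_self {R σ : Type*} [CommRing R] (i : σ) (p : Polynomial R) :
    pderiv i (Polynomial.aeval (X i : MvPolynomial σ R) p)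
      = Polynomial.aeval (X i) (Polynomial.derivative p) := by
  classical
  simp [Derivation.map_aeval]

lemma pderiv_aeval_X_of_ne {R σ : Type*} [CommRing R] {i j : σ} (h : j ≠ i) (p : Polynomial R) :
    pderiv i (Polynomial.aeval (X j : MvPolynomial σ R) p) = 0 := by
  classical
  simp [Derivation.map_aeval, pderiv_X_of_ne h]

lemma C_div_mul_natCast_add [CharZero K] {σ : Type*} {k j : ℕ} (h : k + j ≠ 0) :
    (C ((j : K) / ((k : K) + (j : K))) : MvPolynomial σ K) * ((k + j : ℕ) : MvPolynomial σ K)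
      = C (j : K) := by
  rw [← map_natCast (C : K →+* MvPolynomial σ K), ← C_mul, Nat.cast_add,
    div_mul_cancel₀ _ (by exact_mod_cast h)]

lemma C_div_add_C_div_natCast [CharZero K] {σ : Type*} {k j : ℕ} (h : k + j ≠ 0) :
    (C ((j : K) / ((k : K) + (j : K))) : MvPolynomial σ K) + C ((k : K) / ((k : K) + (j : K)))
      = 1 := by
  rw [← C_add, ← add_div, add_comm (j : K), div_self (by exact_mod_cast h), C_1]

lemma pderiv_zero_curvePrimitive (a j : ℕ) (f₀ : Polynomial K) (fc : ℕ → Polynomial K) :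
    pderiv 0 (curvePrimitive a j f₀ fc)
      = ((∑ k ∈ Finset.Icc 1 (a - 1),
            C ((j : K) / ((k : K) + (j : K))) *
              Polynomial.aeval (X 0) (Polynomial.derivative (fc k)) * X 1 ^ k)
          + Polynomial.aeval (X 0) (Polynomial.derivative f₀)) * X 1 ^ j := by
  simp only [curvePrimitive, map_add, map_sum, pderiv_mul, pderiv_C, pderiv_aeval_X_self,
    pderiv_pow, pderiv_X_of_ne (show (1 : Fin 2) ≠ 0 by decide), zero_mul, mul_zero, add_zero,
    zero_add]
  rw [add_mul, Finset.sum_mul]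
  simp only [pow_add, mul_assoc]
  ring

lemma pderiv_one_curvePrimitive [CharZero K] (a j : ℕ) (f₀ : Polynomial K)
    (fc : ℕ → Polynomial K) :
    pderiv 1 (curvePrimitive a j f₀ fc) = C (j : K) * X 1 ^ (j - 1) * curvePoly a f₀ fc := by
  obtain rfl | hj := Nat.eq_zero_or_pos j
  · simp [curvePrimitive]
  simp only [curvePrimitive, map_add, map_sum, pderiv_mul, pderiv_C,
    pderiv_aeval_X_of_ne (show (0 : Fin 2) ≠ 1 by decide), pderiv_pow, pderiv_X_self, zero_mul,
    mul_zero, add_zero, zero_add, mul_one]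
  have hterm : ∀ k ∈ Finset.Icc 1 (a - 1),
      C ((j : K) / ((k : K) + (j : K))) * Polynomial.aeval (X 0) (fc k)
          * (((k + j : ℕ) : MvPolynomial (Fin 2) K) * X 1 ^ (k + j - 1))
        = C (j : K) * X 1 ^ (j - 1) * (Polynomial.aeval (X 0) (fc k) * X 1 ^ k) := by
    intro k _
    rw [show k + j - 1 = k + (j - 1) by omega, pow_add]
    linear_combination (Polynomial.aeval (X 0) (fc k) * X 1 ^ k * X 1 ^ (j - 1))
      * C_div_mul_natCast_add (K := K) (σ := Fin 2) (show k + j ≠ 0 by omega)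
  rw [Finset.sum_congr rfl hterm, ← Finset.mul_sum, curvePoly,
    show a + j - 1 = a + (j - 1) by omega, pow_add]
  linear_combination (X 1 ^ a * X 1 ^ (j - 1))
      * C_div_mul_natCast_add (K := K) (σ := Fin 2) (show a + j ≠ 0 by omega)
    - (Polynomial.aeval (X 0) f₀ * X 1 ^ (j - 1))
      * map_natCast (C : K →+* MvPolynomial (Fin 2) K) j

lemma curvePrimitive_add [CharZero K] {a : ℕ} (ha : 0 < a) (j : ℕ) (f₀ : Polynomial K)
    (fc : ℕ → Polynomial K) :
    curvePrimitive a j f₀ fc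
      + (C ((a : K) / ((a : K) + (j : K))) * X 1 ^ a
          + ∑ k ∈ Finset.Icc 1 (a - 1),
              C ((k : K) / ((k : K) + (j : K))) * Polynomial.aeval (X 0) (fc k) * X 1 ^ k) * X 1 ^ j
      = X 1 ^ j * curvePoly a f₀ fc := by
  have hsum : (∑ k ∈ Finset.Icc 1 (a - 1),
        C ((j : K) / ((k : K) + (j : K))) * Polynomial.aeval (X 0) (fc k)
          * (X 1 : MvPolynomial (Fin 2) K) ^ (k + j))
      + (∑ k ∈ Finset.Icc 1 (a - 1),
          C ((k : K) / ((k : K) + (j : K))) * Polynomial.aeval (X 0) (fc k) * X 1 ^ k) * X 1 ^ j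
      = X 1 ^ j * ∑ k ∈ Finset.Icc 1 (a - 1), Polynomial.aeval (X 0) (fc k) * X 1 ^ k := by
    rw [Finset.sum_mul, Finset.mul_sum, ← Finset.sum_add_distrib]
    refine Finset.sum_congr rfl fun k hk ↦ ?_
    have hk1 : 0 < k := (Finset.mem_Icc.mp hk).1
    rw [pow_add]
    linear_combination (Polynomial.aeval (X 0) (fc k) * X 1 ^ k * X 1 ^ j)
      * C_div_add_C_div_natCast (K := K) (σ := Fin 2) (show k + j ≠ 0 by omega)
  rw [curvePrimitive, curvePoly, pow_add]
  linear_combination hsum + (X 1 ^ a * X 1 ^ j)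
      * C_div_add_C_div_natCast (K := K) (σ := Fin 2) (show a + j ≠ 0 by omega)

end

open MvPolynomial in
theorem stmt9_general (K : Type) [Field K] [CharZero K]
    (a : ℕ) (ha : 0 < a)
    (f₀ : Polynomial K) (fc : ℕ → Polynomial K)
    (f : MvPolynomial (Fin 2) K)
    (hf : f = X 1 ^ a
      + (∑ k ∈ Finset.Icc 1 (a - 1), Polynomial.aeval (X 0) (fc k) * X 1 ^ k)
      + Polynomial.aeval (X 0) f₀)
    (j l : ℕ) :
    ((Ideal.Quotient.mk (Ideal.span {f}))
        (X 0 ^ l *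
          ((∑ k ∈ Finset.Icc 1 (a - 1),
              C ((j : K) / ((k : K) + (j : K))) *
                Polynomial.aeval (X 0) (Polynomial.derivative (fc k)) * X 1 ^ k)
            + Polynomial.aeval (X 0) (Polynomial.derivative f₀)) *
          X 1 ^ j
        - C (l : K) * X 0 ^ (l - 1) *
          (C ((a : K) / ((a : K) + (j : K))) * X 1 ^ a
            + ∑ k ∈ Finset.Icc 1 (a - 1),
                C ((k : K) / ((k : K) + (j : K))) * Polynomial.aeval (X 0) (fc k) * X 1 ^ k) *
          X 1 ^ j)) •
      (KaehlerDifferential.D K (MvPolynomial (Fin 2) K ⧸ Ideal.span {f}))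
        ((Ideal.Quotient.mk (Ideal.span {f})) (X 0))
      ∈ Set.range (KaehlerDifferential.D K (MvPolynomial (Fin 2) K ⧸ Ideal.span {f})) := by
  replace hf : f = curvePoly a f₀ fc := hf
  refine KaehlerDifferential.mk_smul_D_mk_X_mem_range (G := X 0 ^ l * curvePrimitive a j f₀ fc) 0
    (Ideal.mem_span_singleton'.mpr ⟨C (l : K) * X 0 ^ (l - 1) * X 1 ^ j, ?_⟩) fun k hk ↦ ?_
  · rw [pderiv_mul, pderiv_zero_curvePrimitive, pderiv_pow, pderiv_X_self, hf]
    linear_combination -(C (l : K) * X 0 ^ (l - 1)) * curvePrimitive_add ha j f₀ fc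
      + (X 0 ^ (l - 1) * curvePrimitive a j f₀ fc)
        * map_natCast (C : K →+* MvPolynomial (Fin 2) K) l
  · rw [Fin.eq_one_of_ne_zero k hk, pderiv_mul, pderiv_one_curvePrimitive, pderiv_pow,
      pderiv_X_of_ne (by decide), hf]
    exact Ideal.mem_span_singleton'.mpr ⟨X 0 ^ l * C (j : K) * X 1 ^ (j - 1), by ring⟩

open MvPolynomial in
/-- equality (18) of Denef–Vercauteren (equation (6) in the paper): the
displayed 1-form on the curve `B = K[x,y]/(f)` is exact. -/
theorem stmt9 (K : Type) [Field K] [CharZero K]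
    (a b : ℕ) (ha : 0 < a) (hb : 0 < b) (hab : Nat.Coprime a b)
    (f₀ : Polynomial K) (fc : ℕ → Polynomial K)
    (f : MvPolynomial (Fin 2) K)
    (hf : f = X 1 ^ a
      + (∑ k ∈ Finset.Icc 1 (a - 1), Polynomial.aeval (X 0) (fc k) * X 1 ^ k)
      + Polynomial.aeval (X 0) f₀)
    (j l : ℕ) :
    ((Ideal.Quotient.mk (Ideal.span {f}))
        (X 0 ^ l *
          ((∑ k ∈ Finset.Icc 1 (a - 1),
              C ((j : K) / ((k : K) + (j : K))) *
                Polynomial.aeval (X 0) (Polynomial.derivative (fc k)) * X 1 ^ k)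
            + Polynomial.aeval (X 0) (Polynomial.derivative f₀)) *
          X 1 ^ j
        - C (l : K) * X 0 ^ (l - 1) *
          (C ((a : K) / ((a : K) + (j : K))) * X 1 ^ a
            + ∑ k ∈ Finset.Icc 1 (a - 1),
                C ((k : K) / ((k : K) + (j : K))) * Polynomial.aeval (X 0) (fc k) * X 1 ^ k) *
          X 1 ^ j)) •
      (KaehlerDifferential.D K (MvPolynomial (Fin 2) K ⧸ Ideal.span {f}))
        ((Ideal.Quotient.mk (Ideal.span {f})) (X 0))
      ∈ Set.range (KaehlerDifferential.D K (MvPolynomial (Fin 2) K ⧸ Ideal.span {f})) :=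
  stmt9_general K a ha f₀ fc f hf j l
end

section
/- Let K be a field of characteristic 0, let a, b be coprime positive integers, let α ∈ K, and set B := K[x,y]/(y^a + x^b + α) with Ω := Ω_{B/K} the module of Kähler differentials and d : B → Ω the universal derivation. Then for all natural numbers l ≥ 1 and j ≥ 1, the element (l·a + j·b + a·b)·x^{l+b−1}·y^j·dx + l·a·α·x^{l−1}·y^j·dx of Ω lies in the image of d. -/
/-!
The primitive is `-a·x^l·y^(j+a)`. Differentiating the curve equation gives
`a·y^(a-1)·dy = -b·x^(b-1)·dx`, which turns the `dy`-part of its differential into a multiple of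
`dx`; substituting `y^a = -x^b - α` in the remaining `dx`-part yields the stated form.
-/

namespace Derivation

variable {R A M : Type*} [CommRing R] [CommRing A] [Algebra R A] [AddCommGroup M] [Module A M]
  [Module R M] (D : Derivation R A M) {x y c : A} {a b : ℕ}

theorem leibniz_pow_add_leibniz_pow_eq_zero (hrel : y ^ a + x ^ b + c = 0) (hc : D c = 0) :
    a • y ^ (a - 1) • D y + b • x ^ (b - 1) • D x = 0 := by
  simpa only [map_add, leibniz_pow, hc, add_zero, map_zero] using congrArg D hrel

theorem map_neg_mul_pow_mul_pow_of_pow_add_pow_add_eq_zero (hrel : y ^ a + x ^ b + c = 0)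
    (hc : D c = 0) (ha : 0 < a) (hb : 0 < b) {l : ℕ} (hl : 0 < l) (j : ℕ) :
    D (-(a * (x ^ l * y ^ (j + a)))) =
      (((l * a + j * b + a * b : ℕ) : A) * x ^ (l + b - 1) * y ^ j
        + ((l * a : ℕ) : A) * c * x ^ (l - 1) * y ^ j) • D x := by
  have hdrel := D.leibniz_pow_add_leibniz_pow_eq_zero hrel hc
  obtain ⟨a, rfl⟩ := Nat.exists_eq_add_one_of_ne_zero ha.ne'
  obtain ⟨b, rfl⟩ := Nat.exists_eq_add_one_of_ne_zero hb.ne'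
  obtain ⟨l, rfl⟩ := Nat.exists_eq_add_one_of_ne_zero hl.ne'
  simp only [Nat.add_sub_cancel, ← add_assoc] at hdrel ⊢
  calc D (-((a + 1 : ℕ) * (x ^ (l + 1) * y ^ (j + a + 1))))
      = -(((a + 1 : ℕ) : A) • (x ^ (l + 1) • ((j + a + 1) • y ^ (j + a) • D y)
          + y ^ (j + a + 1) • ((l + 1) • x ^ l • D x))) := by
        rw [map_neg, leibniz, map_natCast, smul_zero, add_zero, leibniz, leibniz_pow,
          leibniz_pow, Nat.add_sub_cancel, Nat.add_sub_cancel]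
    _ = (((((l + 1) * (a + 1) + j * (b + 1) + (a + 1) * (b + 1) : ℕ) : A)
            * x ^ (l + 1 + b) * y ^ j + (((l + 1) * (a + 1) : ℕ) : A) * c * x ^ l * y ^ j) • D x
        - ((j + a + 1 : ℕ) : A) • (x ^ (l + 1) * y ^ j) •
            ((a + 1) • y ^ a • D y + (b + 1) • x ^ b • D x)) := by
        match_scalars
        · ring
        · linear_combination (-(((a : A) + 1) * ((l : A) + 1) * x ^ l * y ^ j)) * hrel
    _ = _ := by rw [hdrel, smul_zero, smul_zero, sub_zero]

end Derivation

open MvPolynomial in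
theorem stmt10_general (K : Type) [Field K]
    (a b : ℕ) (ha : 0 < a) (hb : 0 < b) (α : K)
    (f : MvPolynomial (Fin 2) K) (hf : f = X 1 ^ a + X 0 ^ b + C α)
    (l j : ℕ) (hl : 1 ≤ l) :
    ((Ideal.Quotient.mk (Ideal.span {f}))
        (((l * a + j * b + a * b : ℕ) : MvPolynomial (Fin 2) K)
            * X 0 ^ (l + b - 1) * X 1 ^ j
          + ((l * a : ℕ) : MvPolynomial (Fin 2) K) * C α * X 0 ^ (l - 1) * X 1 ^ j)) •
      (KaehlerDifferential.D K (MvPolynomial (Fin 2) K ⧸ Ideal.span {f}))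
        ((Ideal.Quotient.mk (Ideal.span {f})) (X 0))
      ∈ Set.range (KaehlerDifferential.D K (MvPolynomial (Fin 2) K ⧸ Ideal.span {f})) := by
  set π := Ideal.Quotient.mk (Ideal.span {f})
  have hrel : π (X 1) ^ a + π (X 0) ^ b + π (C α) = 0 := by
    simpa only [hf, map_add, map_pow] using Ideal.Quotient.mk_singleton_self f
  have hc : KaehlerDifferential.D K _ (π (C α)) = 0 :=
    (KaehlerDifferential.D K _).map_algebraMap α
  simp only [map_add, map_mul, map_pow, map_natCast]
  exact ⟨_, (KaehlerDifferential.D K _).map_neg_mul_pow_mul_pow_of_pow_add_pow_add_eq_zero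
    hrel hc ha hb hl j⟩

open MvPolynomial in
/-- equality (10) in the proof of Theorem 3.1: on the superelliptic curve
`y^a + x^b + α = 0`, the 1-form `(l·a+j·b+a·b)·x^{l+b−1}·y^j·dx + l·a·α·x^{l−1}·y^j·dx`
is exact. -/
theorem stmt10 (K : Type) [Field K] [CharZero K]
    (a b : ℕ) (ha : 0 < a) (hb : 0 < b) (hab : Nat.Coprime a b) (α : K)
    (f : MvPolynomial (Fin 2) K) (hf : f = X 1 ^ a + X 0 ^ b + C α)
    (l j : ℕ) (hl : 1 ≤ l) (hj : 1 ≤ j) :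
    ((Ideal.Quotient.mk (Ideal.span {f}))
        (((l * a + j * b + a * b : ℕ) : MvPolynomial (Fin 2) K)
            * X 0 ^ (l + b - 1) * X 1 ^ j
          + ((l * a : ℕ) : MvPolynomial (Fin 2) K) * C α * X 0 ^ (l - 1) * X 1 ^ j)) •
      (KaehlerDifferential.D K (MvPolynomial (Fin 2) K ⧸ Ideal.span {f}))
        ((Ideal.Quotient.mk (Ideal.span {f})) (X 0))
      ∈ Set.range (KaehlerDifferential.D K (MvPolynomial (Fin 2) K ⧸ Ideal.span {f})) :=
  stmt10_general K a b ha hb α f hf l j hl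
end

section
/- Let K be a field of characteristic 0, let a, b be coprime positive integers with a, b ≥ 2, let α ∈ K, and set B := K[x,y]/(y^a + x^b + α) with Ω := Ω_{B/K} the module of Kähler differentials and d : B → Ω the universal derivation. Then for all natural numbers N, j, r with 1 ≤ j ≤ a−1 and 1 ≤ r ≤ b−1, the element x^{(N+1)·b + (r−1)}·y^j·dx − ( ∏_{n=0}^{N} ( −(n·b+r)·a·α / ((n·b+r)·a + j·b + a·b) ) )·x^{r−1}·y^j·dx of Ω lies in the image of d. -/
/-!
Differentiating the curve equation gives `a y^{a-1} dy = -b x^{b-1} dx`; together with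
`y^a = -x^b - α` this expresses `a · d(x^l y^{j+a})` as a combination of `x^{l+b-1} y^j dx` and
`x^{l-1} y^j dx` (equality (10); the lemmas write `m` for `l - 1`). Since `la + jb + ab ≠ 0` in
characteristic 0, each `x^{l+b-1} y^j dx` is a scalar multiple of `x^{l-1} y^j dx` modulo exact
forms, and chaining these congruences along `l = r, r + b, …, r + Nb` gives the product formula.
-/

open Finset in
theorem Submodule.sub_prod_smul_mem_of_forall_sub_smul_mem {R M : Type*} [CommRing R]
    [AddCommGroup M] [Module R M] (E : Submodule R M) (v : ℕ → M) (c : ℕ → R)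
    (h : ∀ n, v (n + 1) - c n • v n ∈ E) (N : ℕ) :
    v N - (∏ n ∈ range N, c n) • v 0 ∈ E := by
  induction N with
  | zero => simp
  | succ N ih =>
    have key : v (N + 1) - (∏ n ∈ range (N + 1), c n) • v 0
        = (v (N + 1) - c N • v N) + c N • (v N - (∏ n ∈ range N, c n) • v 0) := by
      rw [prod_range_succ]; module
    rw [key]
    exact E.add_mem (h N) (E.smul_mem _ ih)

theorem Derivation.superelliptic_step_relation {R B M : Type*} [CommRing R] [CommRing B]
    [Algebra R B] [AddCommGroup M] [Module B M] [Module R M] [IsScalarTower R B M]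
    (D : Derivation R B M) {a b : ℕ} (ha : 0 < a) (hb : 0 < b) {α : R} {x y : B}
    (hxy : y ^ a + x ^ b + algebraMap R B α = 0) (j m : ℕ) :
    (((m + 1) * a + j * b + a * b : ℕ) : R) • ((x ^ (m + b) * y ^ j) • D x)
      + (((m + 1) * a : ℕ) * α) • ((x ^ m * y ^ j) • D x)
      + (a : R) • D (x ^ (m + 1) * y ^ (j + a)) = 0 := by
  obtain ⟨a, rfl⟩ := Nat.exists_eq_add_one.mpr ha
  obtain ⟨b, rfl⟩ := Nat.exists_eq_add_one.mpr hb
  have hdiff : (a + 1) • (y ^ a • D y) + (b + 1) • (x ^ b • D x) = 0 := by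
    simpa using congrArg D hxy
  have hy : y ^ (a + 1) = -x ^ (b + 1) - algebraMap R B α := by linear_combination hxy
  have hD : D (x ^ (m + 1) * y ^ (j + (a + 1)))
      = x ^ (m + 1) • ((j + (a + 1)) • (y ^ (j + a) • D y))
        + y ^ (j + (a + 1)) • ((m + 1) • (x ^ m • D x)) := by
    simp [Derivation.leibniz, Derivation.leibniz_pow]
  rw [hD, pow_add y j (a + 1), hy]
  linear_combination (norm := module) ((j + (a + 1) : ℕ) * x ^ (m + 1) * y ^ j) • hdiff

theorem Derivation.superelliptic_step_mem_range {K B M : Type*} [Field K] [CharZero K]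
    [CommRing B] [Algebra K B] [AddCommGroup M] [Module B M] [Module K M] [IsScalarTower K B M]
    (D : Derivation K B M) {a b : ℕ} (ha : 0 < a) (hb : 0 < b) {α : K} {x y : B}
    (hxy : y ^ a + x ^ b + algebraMap K B α = 0) (j m : ℕ) :
    (x ^ (m + b) * y ^ j) • D x
      - (-((((m + 1) * a : ℕ) : K) * α) / (((m + 1) * a + j * b + a * b : ℕ) : K))
        • ((x ^ m * y ^ j) • D x) ∈ LinearMap.range (D : B →ₗ[K] M) := by
  have hden : (((m + 1) * a + j * b + a * b : ℕ) : K) ≠ 0 :=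
    Nat.cast_ne_zero.mpr (by positivity)
  refine ⟨(-(a : K) / (((m + 1) * a + j * b + a * b : ℕ) : K))
    • (x ^ (m + 1) * y ^ (j + a)), ?_⟩
  have key := D.superelliptic_step_relation ha hb hxy j m
  rw [Derivation.coeFn_coe, D.map_smul]
  generalize (x ^ (m + b) * y ^ j) • D x = A at key ⊢
  generalize (x ^ m * y ^ j) • D x = A' at key ⊢
  generalize D (x ^ (m + 1) * y ^ (j + a)) = V at key ⊢
  linear_combination (norm := skip) (-(((m + 1) * a + j * b + a * b : ℕ) : K)⁻¹) • key
  match_scalars <;> push_cast at hden ⊢ <;> field_simp <;> ring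

open Finset in
theorem Derivation.superelliptic_iterate_mem_range {K B M : Type*} [Field K] [CharZero K]
    [CommRing B] [Algebra K B] [AddCommGroup M] [Module B M] [Module K M] [IsScalarTower K B M]
    (D : Derivation K B M) {a b : ℕ} (ha : 0 < a) (hb : 0 < b) {α : K} {x y : B}
    (hxy : y ^ a + x ^ b + algebraMap K B α = 0) (j r N : ℕ) :
    (x ^ (N * b + r) * y ^ j
      - algebraMap K B (∏ n ∈ range N,
          -((((n * b + r + 1) * a : ℕ) : K) * α)
            / (((n * b + r + 1) * a + j * b + a * b : ℕ) : K))
        * (x ^ r * y ^ j)) • D x ∈ Set.range D := by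
  have htelescope := (LinearMap.range (D : B →ₗ[K] M)).sub_prod_smul_mem_of_forall_sub_smul_mem
    (fun n ↦ (x ^ (n * b + r) * y ^ j) • D x) _ (fun n ↦ by
      rw [show (n + 1) * b + r = n * b + r + b by ring]
      exact D.superelliptic_step_mem_range ha hb hxy j (n * b + r)) N
  rw [zero_mul, zero_add] at htelescope
  rwa [sub_smul, mul_smul (algebraMap K B _), algebraMap_smul]

open MvPolynomial in
theorem stmt11_general (K : Type) [Field K] [CharZero K]
    (a b : ℕ) (ha : 2 ≤ a) (hb : 2 ≤ b) (α : K)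
    (f : MvPolynomial (Fin 2) K) (hf : f = X 1 ^ a + X 0 ^ b + C α)
    (N j r : ℕ) (hr1 : 1 ≤ r) :
    ((Ideal.Quotient.mk (Ideal.span {f})) (X 0 ^ ((N + 1) * b + (r - 1)) * X 1 ^ j)
      - (Ideal.Quotient.mk (Ideal.span {f}))
          (C (∏ n ∈ Finset.range (N + 1),
                (-((((n * b + r) * a : ℕ) : K) * α)
                  / ((((n * b + r) * a + j * b + a * b : ℕ)) : K)))
            * (X 0 ^ (r - 1) * X 1 ^ j))) •
      (KaehlerDifferential.D K (MvPolynomial (Fin 2) K ⧸ Ideal.span {f}))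
        ((Ideal.Quotient.mk (Ideal.span {f})) (X 0))
      ∈ Set.range (KaehlerDifferential.D K (MvPolynomial (Fin 2) K ⧸ Ideal.span {f})) := by
  have hcurve : Ideal.Quotient.mk (Ideal.span {f}) (X 1) ^ a
      + Ideal.Quotient.mk (Ideal.span {f}) (X 0) ^ b + algebraMap K _ α = 0 := by
    simpa only [hf, map_add, map_pow, ← algebraMap_eq, Ideal.Quotient.mk_algebraMap]
      using Ideal.Quotient.mk_singleton_self f
  obtain ⟨r, rfl⟩ := Nat.exists_eq_add_one.mpr hr1
  simp only [map_mul, map_pow, ← algebraMap_eq, Ideal.Quotient.mk_algebraMap, Nat.add_sub_cancel]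
  exact (KaehlerDifferential.D K _).superelliptic_iterate_mem_range (by omega) (by omega) hcurve
    j r (N + 1)

open MvPolynomial in
/-- equality (11) in the proof of Theorem 3.1, obtained by iterating
equality (10): on the superelliptic curve `y^a + x^b + α = 0`,
`x^{(N+1)b+(r−1)} y^j dx − (∏_{n=0}^{N} −(nb+r)aα/((nb+r)a+jb+ab)) x^{r−1} y^j dx`
is exact. -/
theorem stmt11 (K : Type) [Field K] [CharZero K]
    (a b : ℕ) (ha : 2 ≤ a) (hb : 2 ≤ b) (hab : Nat.Coprime a b) (α : K)
    (f : MvPolynomial (Fin 2) K) (hf : f = X 1 ^ a + X 0 ^ b + C α)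
    (N j r : ℕ) (hj1 : 1 ≤ j) (hj2 : j ≤ a - 1) (hr1 : 1 ≤ r) (hr2 : r ≤ b - 1) :
    ((Ideal.Quotient.mk (Ideal.span {f})) (X 0 ^ ((N + 1) * b + (r - 1)) * X 1 ^ j)
      - (Ideal.Quotient.mk (Ideal.span {f}))
          (C (∏ n ∈ Finset.range (N + 1),
                (-((((n * b + r) * a : ℕ) : K) * α)
                  / ((((n * b + r) * a + j * b + a * b : ℕ)) : K)))
            * (X 0 ^ (r - 1) * X 1 ^ j))) •
      (KaehlerDifferential.D K (MvPolynomial (Fin 2) K ⧸ Ideal.span {f}))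
        ((Ideal.Quotient.mk (Ideal.span {f})) (X 0))
      ∈ Set.range (KaehlerDifferential.D K (MvPolynomial (Fin 2) K ⧸ Ideal.span {f})) :=
  stmt11_general K a b ha hb α f hf N j r hr1
end

section
/- Let K be a field of characteristic 0, let a, b be coprime integers with a, b ≥ 2, and let f = y^a + Σ_{k=1}^{a−1} f_k(x)·y^k + f_0(x) ∈ K[x,y] with f_k(x) ∈ K[x], deg f_0 = b, and a·deg f_k + b·k < a·b for every 1 ≤ k ≤ a−1 with f_k ≠ 0. Set B := K[x,y]/(f), let Ω := Ω_{B/K} be the module of Kähler differentials with universal derivation d : B → Ω, and let H := Ω / d(B) be the quotient of Ω by the K-subspace d(B). Then the classes [x^i·y^j·dx] for i ∈ ℕ and 1 ≤ j ≤ a−1 span H as a K-vector space. -/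
/-!
Since `x` and `y` generate `B`, the module `Ω[B⁄K]` is spanned over `B` by `dx` and `dy`, and `B`
is spanned over `K` by the monomials `x^i y^j`. In characteristic `0`, differentiating `x^(n+1)`
and `x^(i+1) y^(j+1)` gives `[x^n dx] = 0` and `(j+1) [x^(i+1) y^j dy] = -(i+1) [x^i y^(j+1) dx]`,
so every class is of the form `[g dx]`. Finally, the relation `f(x, y) = 0`, monic of degree `a`
in `y`, rewrites every `g` as a `K`-combination of monomials `x^i y^j` with `j < a`.
-/

open KaehlerDifferential Polynomial

section Monomials

variable {R S : Type*} [CommRing R] [CommRing S] [Algebra R S] {x y : S}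

theorem Algebra.span_pow_mul_pow_eq_top (hxy : Algebra.adjoin R {x, y} = ⊤) :
    Submodule.span R {x ^ i * y ^ j | (i : ℕ) (j : ℕ)} = ⊤ := by
  have hclosure : ((Submonoid.closure {x, y} : Submonoid S) : Set S) =
      {x ^ i * y ^ j | (i : ℕ) (j : ℕ)} :=
    Set.ext fun z => Submonoid.mem_closure_pair x y z
  rw [← hclosure, ← Algebra.adjoin_eq_span, hxy, Algebra.top_toSubmodule]

theorem aeval_mul_pow_mem_span_pow_mul_pow {a k : ℕ} (hk : k < a) (p : R[X]) :
    aeval x p * y ^ k ∈ Submodule.span R {x ^ i * y ^ j | (i : ℕ) (j < a)} := by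
  rw [aeval_eq_sum_range, Finset.sum_mul]
  refine Submodule.sum_mem _ fun i _ => ?_
  rw [smul_mul_assoc]
  exact Submodule.smul_mem _ _ (Submodule.subset_span ⟨i, k, hk, rfl⟩)

theorem pow_mem_span_pow_mul_pow_of_eq_zero {a : ℕ} (ha : 0 < a) (f₀ : R[X]) (fc : ℕ → R[X])
    (h : y ^ a + ∑ k ∈ Finset.Icc 1 (a - 1), aeval x (fc k) * y ^ k + aeval x f₀ = 0) :
    y ^ a ∈ Submodule.span R {x ^ i * y ^ j | (i : ℕ) (j < a)} := by
  rw [add_assoc, add_eq_zero_iff_eq_neg] at h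
  rw [h, ← mul_one (aeval x f₀), ← pow_zero y]
  refine Submodule.neg_mem _ (Submodule.add_mem _ (Submodule.sum_mem _ fun k hk => ?_)
    (aeval_mul_pow_mem_span_pow_mul_pow ha f₀))
  exact aeval_mul_pow_mem_span_pow_mul_pow (by grind) (fc k)

theorem span_pow_mul_pow_lt_eq_top {a : ℕ}
    (hspan : Submodule.span R {x ^ i * y ^ j | (i : ℕ) (j : ℕ)} = ⊤)
    (hya : y ^ a ∈ Submodule.span R {x ^ i * y ^ j | (i : ℕ) (j < a)}) :
    Submodule.span R {x ^ i * y ^ j | (i : ℕ) (j < a)} = ⊤ := by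
  rw [eq_top_iff, ← hspan, Submodule.span_le]
  rintro _ ⟨i, j, rfl⟩
  induction j using Nat.strong_induction_on generalizing i with
  | _ j IH =>
    rcases lt_or_ge j a with hj | hj
    · exact Submodule.subset_span ⟨i, j, hj, rfl⟩
    obtain ⟨m, rfl⟩ := Nat.exists_eq_add_of_le' hj
    have hmul := Submodule.mem_map_of_mem (f := LinearMap.mulLeft R (x ^ i * y ^ m)) hya
    rw [Submodule.map_span] at hmul
    rw [pow_add, ← mul_assoc]
    refine Submodule.span_le.mpr ?_ hmul
    rintro _ ⟨_, ⟨k, l, hl, rfl⟩, rfl⟩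
    have := IH (m + l) (by omega) (i + k)
    simpa only [LinearMap.mulLeft_apply, pow_add, mul_mul_mul_comm, mul_comm] using this

theorem MvPolynomial.adjoin_pair_map_X_eq_top_of_surjective {A : Type*} [CommRing A] [Algebra R A]
    {φ : MvPolynomial (Fin 2) R →ₐ[R] A} (hφ : Function.Surjective φ) :
    Algebra.adjoin R {φ (X 0), φ (X 1)} = ⊤ := by
  have hX : ({X 0, X 1} : Set (MvPolynomial (Fin 2) R)) = Set.range X :=
    Set.ext fun _ => by simp [Fin.exists_fin_two, eq_comm]
  rw [← Set.image_pair, Algebra.adjoin_image, hX, MvPolynomial.adjoin_range_X, Algebra.map_top,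
    (AlgHom.range_eq_top φ).mpr hφ]

end Monomials

theorem KaehlerDifferential.span_D_image_eq_top {R S : Type*} [CommRing R] [CommRing S]
    [Algebra R S] {s : Set S} (hs : Algebra.adjoin R s = ⊤) :
    Submodule.span S (D R S '' s) = ⊤ := by
  set N := Submodule.span S (D R S '' s)
  have hD : N.mkQ.compDer (D R S) = 0 :=
    Derivation.ext_of_adjoin_eq_top s hs fun x hx => by
      simpa using Submodule.subset_span (Set.mem_image_of_mem _ hx)
  rw [eq_top_iff, ← span_range_derivation, Submodule.span_le]
  rintro _ ⟨x, rfl⟩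
  simpa using congr($hD x)

namespace KaehlerDifferential

variable (K B : Type*) [Field K] [CommRing B] [Algebra K B]

noncomputable abbrev exactForms : Submodule K Ω[B⁄K] := LinearMap.range (D K B).toLinearMap

variable {B}

/-- `g ↦ [g dx]`, the class of `g • D x` in `H = Ω[B⁄K] ⧸ d(B)`. -/
noncomputable def classSMulD (x : B) : B →ₗ[K] Ω[B⁄K] ⧸ exactForms K B :=
  (exactForms K B).mkQ ∘ₗ (LinearMap.toSpanSingleton B Ω[B⁄K] (D K B x)).restrictScalars K

variable {K}

@[simp]
theorem classSMulD_apply (x g : B) :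
    classSMulD K x g = Submodule.Quotient.mk (p := exactForms K B) (g • D K B x) := rfl

@[simp]
theorem mk_D_eq_zero (g : B) : Submodule.Quotient.mk (p := exactForms K B) (D K B g) = 0 :=
  (Submodule.Quotient.mk_eq_zero _).mpr ⟨g, rfl⟩

theorem add_smul_classSMulD_pow_mul_pow (x y : B) (i j : ℕ) :
    ((i : K) + 1) • classSMulD K x (x ^ i * y ^ (j + 1)) +
      ((j : K) + 1) • classSMulD K y (x ^ (i + 1) * y ^ j) = 0 := by
  have := mk_D_eq_zero (K := K) (x ^ (i + 1) * y ^ (j + 1))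
  rw [Derivation.leibniz, Derivation.leibniz_pow, Derivation.leibniz_pow, smul_comm (x ^ (i + 1)),
    smul_comm (y ^ (j + 1)), smul_smul, smul_smul] at this
  rw [← this]
  simp [← Nat.cast_smul_eq_nsmul K, mul_comm, add_comm]

variable [CharZero K]

theorem classSMulD_pow (x : B) (n : ℕ) : classSMulD K x (x ^ n) = 0 := by
  have h := mk_D_eq_zero (K := K) (x ^ (n + 1))
  rw [Derivation.leibniz_pow, Nat.add_sub_cancel, Submodule.Quotient.mk_smul,
    ← Nat.cast_smul_eq_nsmul K, Nat.cast_succ] at h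
  exact (smul_eq_zero.mp h).resolve_left (Nat.cast_add_one_ne_zero n)

variable {x y : B}

theorem classSMulD_mem_range_of_adjoin_eq_top (hxy : Algebra.adjoin K {x, y} = ⊤) (g : B) :
    classSMulD K y g ∈ LinearMap.range (classSMulD K x) := by
  suffices ⊤ ≤ (LinearMap.range (classSMulD K x)).comap (classSMulD K y) from this trivial
  rw [← Algebra.span_pow_mul_pow_eq_top hxy, Submodule.span_le]
  rintro _ ⟨i, j, rfl⟩
  rcases i with _ | i
  · rw [pow_zero, one_mul, SetLike.mem_coe, Submodule.mem_comap, classSMulD_pow]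
    exact Submodule.zero_mem _
  · refine ⟨(-((j : K) + 1)⁻¹ * ((i : K) + 1)) • (x ^ i * y ^ (j + 1)), ?_⟩
    rw [map_smul, mul_smul, neg_smul, eq_neg_of_add_eq_zero_left
      (add_smul_classSMulD_pow_mul_pow x y i j), smul_neg, neg_neg,
      inv_smul_smul₀ (Nat.cast_add_one_ne_zero j)]

theorem range_classSMulD_eq_top (hxy : Algebra.adjoin K {x, y} = ⊤) :
    LinearMap.range (classSMulD K x) = ⊤ := by
  refine eq_top_iff.mpr fun w _ => ?_
  obtain ⟨ω, rfl⟩ := Submodule.mkQ_surjective _ w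
  have hω : ω ∈ Submodule.span B {D K B x, D K B y} := by
    rw [← Set.image_pair, span_D_image_eq_top hxy]
    trivial
  obtain ⟨u, v, rfl⟩ := Submodule.mem_span_pair.mp hω
  obtain ⟨h, hh⟩ := classSMulD_mem_range_of_adjoin_eq_top hxy v
  exact ⟨u + h, by rw [map_add, hh]; rfl⟩

theorem span_classSMulD_pow_mul_pow_eq_top {a : ℕ} (hxy : Algebra.adjoin K {x, y} = ⊤)
    (hya : y ^ a ∈ Submodule.span K {x ^ i * y ^ j | (i : ℕ) (j < a)}) :
    Submodule.span K {w | ∃ i j : ℕ, 1 ≤ j ∧ j < a ∧ w = classSMulD K x (x ^ i * y ^ j)} = ⊤ := by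
  rw [eq_top_iff, ← range_classSMulD_eq_top hxy, LinearMap.range_eq_map,
    ← span_pow_mul_pow_lt_eq_top (Algebra.span_pow_mul_pow_eq_top hxy) hya, Submodule.map_span,
    Submodule.span_le]
  rintro _ ⟨_, ⟨i, j, hj, rfl⟩, rfl⟩
  rcases j with _ | j
  · rw [pow_zero, mul_one, classSMulD_pow]
    exact Submodule.zero_mem _
  · exact Submodule.subset_span ⟨i, j + 1, by omega, hj, rfl⟩

end KaehlerDifferential

open MvPolynomial in
theorem stmt12_general (K : Type) [Field K] [CharZero K]
    (a : ℕ) (ha : 2 ≤ a)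
    (f₀ : Polynomial K) (fc : ℕ → Polynomial K)
    (f : MvPolynomial (Fin 2) K)
    (hf : f = X 1 ^ a
      + (∑ k ∈ Finset.Icc 1 (a - 1), Polynomial.aeval (X 0) (fc k) * X 1 ^ k)
      + Polynomial.aeval (X 0) f₀) :
    Submodule.span K
      {w : Ω[(MvPolynomial (Fin 2) K ⧸ Ideal.span {f})⁄K] ⧸
          LinearMap.range
            (KaehlerDifferential.D K
              (MvPolynomial (Fin 2) K ⧸ Ideal.span {f})).toLinearMap |
        ∃ i j : ℕ, 1 ≤ j ∧ j ≤ a - 1 ∧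
          w = Submodule.Quotient.mk
            ((Ideal.Quotient.mk (Ideal.span {f}) (X 0 ^ i * X 1 ^ j)) •
              (KaehlerDifferential.D K (MvPolynomial (Fin 2) K ⧸ Ideal.span {f}))
                (Ideal.Quotient.mk (Ideal.span {f}) (X 0)))} = ⊤ := by
  set φ := Ideal.Quotient.mkₐ K (Ideal.span {f})
  have hrel : φ (X 1) ^ a + ∑ k ∈ Finset.Icc 1 (a - 1), aeval (φ (X 0)) (fc k) * φ (X 1) ^ k
      + aeval (φ (X 0)) f₀ = 0 := by
    have hf0 : φ f = 0 := Ideal.Quotient.eq_zero_iff_mem.mpr (Ideal.mem_span_singleton_self f)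
    simpa [hf, Polynomial.aeval_algHom_apply] using hf0
  have hspan := span_classSMulD_pow_mul_pow_eq_top
    (MvPolynomial.adjoin_pair_map_X_eq_top_of_surjective (Ideal.Quotient.mkₐ_surjective K _))
    (pow_mem_span_pow_mul_pow_of_eq_zero (by omega) f₀ fc hrel)
  convert hspan using 2
  ext w
  simp only [Nat.le_sub_one_iff_lt (by omega : 0 < a), classSMulD_apply,
    Ideal.Quotient.mkₐ_eq_mk, map_mul, map_pow]

open MvPolynomial in
/-- Steps 1–2 of the proof of Proposition 2.4 (Denef–Vercauteren): the
classes `[x^i y^j dx]` for `i ∈ ℕ`, `1 ≤ j ≤ a−1` span `H = Ω_{B/K}/d(B)` over `K`. -/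
theorem stmt12 (K : Type) [Field K] [CharZero K]
    (a b : ℕ) (ha : 2 ≤ a) (hb : 2 ≤ b) (hab : Nat.Coprime a b)
    (f₀ : Polynomial K) (fc : ℕ → Polynomial K)
    (hdeg0 : f₀.natDegree = b)
    (hdegk : ∀ k, 1 ≤ k → k ≤ a - 1 → fc k ≠ 0 →
      a * (fc k).natDegree + b * k < a * b)
    (f : MvPolynomial (Fin 2) K)
    (hf : f = X 1 ^ a
      + (∑ k ∈ Finset.Icc 1 (a - 1), Polynomial.aeval (X 0) (fc k) * X 1 ^ k)
      + Polynomial.aeval (X 0) f₀) :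
    Submodule.span K
      {w : Ω[(MvPolynomial (Fin 2) K ⧸ Ideal.span {f})⁄K] ⧸
          LinearMap.range
            (KaehlerDifferential.D K
              (MvPolynomial (Fin 2) K ⧸ Ideal.span {f})).toLinearMap |
        ∃ i j : ℕ, 1 ≤ j ∧ j ≤ a - 1 ∧
          w = Submodule.Quotient.mk
            ((Ideal.Quotient.mk (Ideal.span {f}) (X 0 ^ i * X 1 ^ j)) •
              (KaehlerDifferential.D K (MvPolynomial (Fin 2) K ⧸ Ideal.span {f}))
                (Ideal.Quotient.mk (Ideal.span {f}) (X 0)))} = ⊤ :=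
  stmt12_general K a ha f₀ fc f hf
end
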